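/- Let f ∈ SD²_{d−1}(0+) with d ∈ (0,1) and define f_δ(t,v) = f(t+δ, t+δ−δv) / f(t+δ, t) for t ∈ [0,1], v ∈ [0,1], δ > 0. Then lim_{δ↓0} sup_{0 ≤ t ≤ 1} | ∫₀¹ f_δ(t,v) dv − 1/d | = 0 and lim_{δ↓0} sup_{0 ≤ t ≤ 1} | ∫₀¹ |f_δ(t,v)| dv − 1/d | = 0. -/

import Mathlib

/-!
Fix `τ = t + δ` and put `φ h = F τ (τ - h)`. The diagonal condition on `∂F/∂r` says that
`h φ'(h) / φ(h)` is uniformly close to `d` for small `h`, so `φ' > 0` and `φ h * h ^ (-d/2)` is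
nondecreasing; hence `φ h → 0` and `F τ τ = 0`. Substituting `r = τ - δ v` and using the
fundamental theorem of calculus (the derivative has constant sign, so it is integrable),
`∫₀¹ f_δ(t, v) dv = -F(τ, t) / (δ ∂_r F(τ, t)) = -1/R` with `R = δ ∂_r F(τ, t) / F(τ, t) → -d`
uniformly in `t`. The integrand is nonnegative, so taking absolute values changes nothing.
-/

open MeasureTheory ProbabilityTheory Filter Set intervalIntegral Real

/-- `p01 F t r = ∂F/∂r (t,r)` -/
noncomputable def p01 (F : ℝ → ℝ → ℝ) (t r : ℝ) : ℝ := deriv (fun x => F t x) r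
/-- `p10 F t r = ∂F/∂t (t,r)` -/
noncomputable def p10 (F : ℝ → ℝ → ℝ) (t r : ℝ) : ℝ := deriv (fun x => F x r) t
/-- `p11 F t r = ∂²F/∂t∂r (t,r)` -/
noncomputable def p11 (F : ℝ → ℝ → ℝ) (t r : ℝ) : ℝ := deriv (fun x => p01 F x r) t
/-- `p02 F t r = ∂²F/∂r² (t,r)` -/
noncomputable def p02 (F : ℝ → ℝ → ℝ) (t r : ℝ) : ℝ := deriv (fun x => p01 F t x) r

/-- `lim_{h↓0} sup_{t∈K} |G h t + c| = 0` for every compact `K ⊂ ℝ`. -/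
def UnifDiagLimit (G : ℝ → ℝ → ℝ) (c : ℝ) : Prop :=
  ∀ K : Set ℝ, IsCompact K → ∀ ε > 0, ∃ h₀ > 0, ∀ h : ℝ, 0 < h → h < h₀ →
    ∀ t ∈ K, |G h t + c| < ε

/-- `F ∈ SR²_ρ(0+)` : a function of smooth variation of index `ρ` at the diagonal. -/
def SmoothVar (F : ℝ → ℝ → ℝ) (ρ : ℝ) : Prop :=
  ContinuousOn (fun p : ℝ × ℝ => F p.1 p.2) {p : ℝ × ℝ | p.2 ≤ p.1} ∧
  ContDiffOn ℝ 2 (fun p : ℝ × ℝ => F p.1 p.2) {p : ℝ × ℝ | p.2 < p.1} ∧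
  (∀ t r : ℝ, r < t → 0 < F t r) ∧
  UnifDiagLimit (fun h t => h * p01 F t (t - h) / F t (t - h)) ρ ∧
  UnifDiagLimit (fun h t => h * p10 F (t + h) t / F (t + h) t) (-ρ) ∧
  UnifDiagLimit (fun h t => h ^ 2 * p11 F t (t - h) / F t (t - h)) (ρ * (ρ - 1)) ∧
  UnifDiagLimit (fun h t => h ^ 2 * p02 F t (t - h) / F t (t - h)) (-(ρ * (ρ - 1)))

open Topology

theorem eq_zero_of_mul_le_mul_deriv {φ φ' : ℝ → ℝ} {c δ : ℝ} (hc : 0 < c) (hδ : 0 < δ)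
    (hcont : ContinuousOn φ (Icc 0 δ)) (hderiv : ∀ h ∈ Ioo 0 δ, HasDerivAt φ (φ' h) h)
    (hnonneg : ∀ h ∈ Ioc 0 δ, 0 ≤ φ h) (hslope : ∀ h ∈ Ioo 0 δ, c * φ h ≤ h * φ' h) :
    φ 0 = 0 := by
  have hψ : ∀ h ∈ Ioo 0 δ, HasDerivAt (fun x => φ x * x ^ (-c))
      (h ^ (-c) / h * (h * φ' h - c * φ h)) h := by
    intro h hh
    refine ((hderiv h hh).mul (hasDerivAt_rpow_const (p := -c) (Or.inl hh.1.ne'))).congr_deriv ?_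
    have hh0 := hh.1.ne'
    rw [rpow_sub_one hh0]
    field_simp
    ring
  have hmono : MonotoneOn (fun x => φ x * x ^ (-c)) (Ioc 0 δ) := by
    refine monotoneOn_of_deriv_nonneg (convex_Ioc 0 δ) ?_ ?_ ?_
    · exact (hcont.mono Ioc_subset_Icc_self).mul
        (continuousOn_id.rpow_const fun x hx => Or.inl hx.1.ne')
    · rw [interior_Ioc]
      exact fun h hh => (hψ h hh).differentiableAt.differentiableWithinAt
    · rw [interior_Ioc]
      intro h hh
      rw [(hψ h hh).deriv]
      have := hslope h hh
      have := hh.1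
      positivity
  have hbound : ∀ h ∈ Ioc 0 δ, φ h ≤ φ δ * δ ^ (-c) * h ^ c := by
    intro h hh
    have := hmono hh ⟨hδ, le_rfl⟩ hh.2
    calc φ h = φ h * h ^ (-c) * h ^ c := by
          rw [mul_assoc, ← rpow_add hh.1, neg_add_cancel, rpow_zero, mul_one]
      _ ≤ φ δ * δ ^ (-c) * h ^ c := by have := hh.1; gcongr
  have hlim : Tendsto (fun h => φ δ * δ ^ (-c) * h ^ c) (𝓝[>] 0) (𝓝 0) := by
    have := (continuousAt_rpow_const 0 c (Or.inr hc.le)).tendsto.const_mul (φ δ * δ ^ (-c))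
    rw [zero_rpow hc.ne', mul_zero] at this
    exact this.mono_left nhdsWithin_le_nhds
  have hφ : Tendsto φ (𝓝[>] 0) (𝓝 (φ 0)) := by
    rw [← nhdsWithin_Ioc_eq_nhdsGT hδ]
    exact (hcont 0 ⟨le_rfl, hδ.le⟩).tendsto.mono_left (nhdsWithin_mono _ Ioc_subset_Icc_self)
  have hev : ∀ᶠ h in 𝓝[>] (0 : ℝ), h ∈ Ioc 0 δ := Ioc_mem_nhdsGT hδ
  refine le_antisymm (le_of_tendsto_of_tendsto hφ hlim ?_)
    (ge_of_tendsto hφ (hev.mono hnonneg))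
  exact hev.mono hbound

theorem mul_le_neg_of_abs_div_add_lt {x y d : ℝ} (hy : 0 < y) (h : |x / y + d| < d / 2) :
    d / 2 * y ≤ -x := by
  have : x / y < -(d / 2) := by linarith [(abs_lt.mp h).2]
  rw [div_lt_iff₀ hy] at this
  linarith

section Slices

variable {F : ℝ → ℝ → ℝ}

theorem hasDerivAt_p01
    (hD : ContDiffOn ℝ 2 (fun p : ℝ × ℝ => F p.1 p.2) {p : ℝ × ℝ | p.2 < p.1})
    {t r : ℝ} (h : r < t) : HasDerivAt (F t) (p01 F t r) r := by
  have hF : DifferentiableAt ℝ (fun p : ℝ × ℝ => F p.1 p.2) (t, r) :=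
    (hD.contDiffAt ((isOpen_lt continuous_snd continuous_fst).mem_nhds h)).differentiableAt
      two_ne_zero
  exact (hF.comp r ((differentiableAt_const t).prodMk differentiableAt_id)).hasDerivAt

theorem continuousOn_slice_Iic
    (hC : ContinuousOn (fun p : ℝ × ℝ => F p.1 p.2) {p : ℝ × ℝ | p.2 ≤ p.1}) (t : ℝ) :
    ContinuousOn (F t) (Iic t) :=
  hC.comp (continuous_const.prodMk continuous_id).continuousOn fun _ hr => hr

theorem diag_eq_zero_of_slope_le
    (hC : ContinuousOn (fun p : ℝ × ℝ => F p.1 p.2) {p : ℝ × ℝ | p.2 ≤ p.1})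
    (hD : ContDiffOn ℝ 2 (fun p : ℝ × ℝ => F p.1 p.2) {p : ℝ × ℝ | p.2 < p.1})
    (hpos : ∀ t r : ℝ, r < t → 0 < F t r) {c δ τ : ℝ} (hc : 0 < c) (hδ : 0 < δ)
    (hslope : ∀ h ∈ Ioc 0 δ, c * F τ (τ - h) ≤ -(h * p01 F τ (τ - h))) :
    F τ τ = 0 := by
  have := eq_zero_of_mul_le_mul_deriv (φ := fun h => F τ (τ - h)) (φ' := fun h => -p01 F τ (τ - h))
    hc hδ ?_ ?_ ?_ ?_
  · simpa using this
  · exact (continuousOn_slice_Iic hC τ).comp (continuousOn_const.sub continuousOn_id)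
      fun h hh => show τ - h ≤ τ by linarith [hh.1]
  · intro h hh
    exact ((hasDerivAt_p01 hD (show τ - h < τ by linarith [hh.1])).comp h
      ((hasDerivAt_id h).const_sub τ)).congr_deriv (mul_neg_one _)
  · exact fun h hh => (hpos τ (τ - h) (by linarith [hh.1])).le
  · intro h hh
    simpa using hslope h (Ioo_subset_Ioc_self hh)

theorem integral_p01_eq_sub
    (hC : ContinuousOn (fun p : ℝ × ℝ => F p.1 p.2) {p : ℝ × ℝ | p.2 ≤ p.1})
    (hD : ContDiffOn ℝ 2 (fun p : ℝ × ℝ => F p.1 p.2) {p : ℝ × ℝ | p.2 < p.1})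
    {t τ : ℝ} (htτ : t ≤ τ) (hneg : ∀ r ∈ Ioo t τ, p01 F τ r ≤ 0) :
    ∫ r in t..τ, p01 F τ r = F τ τ - F τ t := by
  have hcont : ContinuousOn (F τ) (Icc t τ) :=
    (continuousOn_slice_Iic hC τ).mono Icc_subset_Iic_self
  have hderiv : ∀ r ∈ Ioo t τ, HasDerivAt (F τ) (p01 F τ r) r :=
    fun r hr => hasDerivAt_p01 hD hr.2
  have hint : IntervalIntegrable (fun r => -p01 F τ r) volume t τ := by
    refine intervalIntegrable_deriv_of_nonneg (g := fun r => -F τ r) ?_ ?_ ?_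
    · rw [uIcc_of_le htτ]
      exact hcont.neg
    · rw [min_eq_left htτ, max_eq_right htτ]
      exact fun r hr => (hderiv r hr).neg
    · rw [min_eq_left htτ, max_eq_right htτ]
      exact fun r hr => neg_nonneg.mpr (hneg r hr)
  refine integral_eq_sub_of_hasDerivAt_of_le htτ hcont hderiv ?_
  simpa only [Pi.neg_def, neg_neg] using hint.neg

theorem p01_neg_of_slope_le (hpos : ∀ t r : ℝ, r < t → 0 < F t r) {c δ τ : ℝ} (hc : 0 < c)
    (hslope : ∀ h ∈ Ioc 0 δ, c * F τ (τ - h) ≤ -(h * p01 F τ (τ - h))) {h : ℝ}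
    (hh : h ∈ Ioc 0 δ) : p01 F τ (τ - h) < 0 := by
  have hprod : 0 < -(h * p01 F τ (τ - h)) :=
    (mul_pos hc (hpos τ (τ - h) (by linarith [hh.1]))).trans_le (hslope h hh)
  exact neg_of_mul_neg_right (neg_pos.mp hprod) hh.1.le

theorem integral_p01_div_eq
    (hC : ContinuousOn (fun p : ℝ × ℝ => F p.1 p.2) {p : ℝ × ℝ | p.2 ≤ p.1})
    (hD : ContDiffOn ℝ 2 (fun p : ℝ × ℝ => F p.1 p.2) {p : ℝ × ℝ | p.2 < p.1})
    (hpos : ∀ t r : ℝ, r < t → 0 < F t r) {c δ t : ℝ} (hc : 0 < c) (hδ : 0 < δ)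
    (hslope : ∀ h ∈ Ioc 0 δ, c * F (t + δ) (t + δ - h) ≤ -(h * p01 F (t + δ) (t + δ - h))) :
    ∫ v in (0:ℝ)..1, p01 F (t + δ) (t + δ - δ * v) / p01 F (t + δ) t =
      -(δ * p01 F (t + δ) t / F (t + δ) t)⁻¹ := by
  have hneg : ∀ r ∈ Ioo t (t + δ), p01 F (t + δ) r ≤ 0 := fun r hr => by
    have := p01_neg_of_slope_le hpos hc hslope (h := t + δ - r)
      ⟨by linarith [hr.2], by linarith [hr.1]⟩
    rw [sub_sub_cancel] at this
    exact this.le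
  rw [intervalIntegral.integral_div, integral_comp_sub_mul _ hδ.ne', mul_one, mul_zero, sub_zero,
    add_sub_cancel_right, integral_p01_eq_sub hC hD (by linarith) hneg,
    diag_eq_zero_of_slope_le hC hD hpos hc hδ hslope, smul_eq_mul, inv_div]
  ring

theorem integral_abs_p01_div_eq {δ t : ℝ} (hδ : 0 < δ)
    (hneg : ∀ h ∈ Ioc 0 δ, p01 F (t + δ) (t + δ - h) ≤ 0) :
    ∫ v in (0:ℝ)..1, |p01 F (t + δ) (t + δ - δ * v) / p01 F (t + δ) t| =
      ∫ v in (0:ℝ)..1, p01 F (t + δ) (t + δ - δ * v) / p01 F (t + δ) t := by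
  refine integral_congr_ae (Eventually.of_forall fun v hv => ?_)
  rw [uIoc_of_le zero_le_one] at hv
  have hden := hneg δ ⟨hδ, le_rfl⟩
  rw [add_sub_cancel_right] at hden
  exact abs_of_nonneg
    (div_nonneg_of_nonpos (hneg _ ⟨by nlinarith [hv.1], by nlinarith [hv.2]⟩) hden)

end Slices

theorem exists_uniform_slope_le {F : ℝ → ℝ → ℝ} {d η : ℝ}
    (hpos : ∀ t r : ℝ, r < t → 0 < F t r)
    (hlim : UnifDiagLimit (fun h t => h * p01 F t (t - h) / F t (t - h)) d) (hd : 0 < d)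
    (hη : 0 < η) :
    ∃ δ₀ > 0, ∀ δ : ℝ, 0 < δ → δ < δ₀ → ∀ t ∈ Icc (0:ℝ) 1,
      |δ * p01 F (t + δ) t / F (t + δ) t + d| < η ∧
      ∀ h ∈ Ioc 0 δ, d / 2 * F (t + δ) (t + δ - h) ≤ -(h * p01 F (t + δ) (t + δ - h)) := by
  obtain ⟨h₀, hh₀, hsmall⟩ :=
    hlim (Icc 0 2) isCompact_Icc (min η (d / 2)) (lt_min hη (half_pos hd))
  refine ⟨min h₀ 1, lt_min hh₀ one_pos, fun δ hδ hδδ₀ t ht => ?_⟩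
  have hτ : t + δ ∈ Icc (0:ℝ) 2 := ⟨by linarith [ht.1], by linarith [ht.2, min_le_right h₀ 1]⟩
  have hsmall' : ∀ h ∈ Ioc 0 δ,
      |h * p01 F (t + δ) (t + δ - h) / F (t + δ) (t + δ - h) + d| < min η (d / 2) :=
    fun h hh => hsmall h hh.1 (by linarith [hh.2, min_le_left h₀ 1]) _ hτ
  refine ⟨?_, fun h hh => mul_le_neg_of_abs_div_add_lt (hpos _ _ (by linarith [hh.1]))
    ((hsmall' h hh).trans_le (min_le_right _ _))⟩
  have := (hsmall' δ ⟨hδ, le_rfl⟩).trans_le (min_le_left _ _)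
  rwa [add_sub_cancel_right] at this

/-- Lemma 6: for `f ∈ SD²_{d−1}(0+)` and
`f_δ(t,v) = f(t+δ,t+δ−δv)/f(t+δ,t)`,
`lim_{δ↓0} sup_{t∈[0,1]} |∫₀¹ f_δ(t,v) dv − 1/d| = 0` and
`lim_{δ↓0} sup_{t∈[0,1]} |∫₀¹ |f_δ(t,v)| dv − 1/d| = 0`. -/
theorem lemma6 (d : ℝ) (hd : d ∈ Set.Ioo (0:ℝ) 1)
    (F : ℝ → ℝ → ℝ) (hF : SmoothVar F d)
    (f : ℝ → ℝ → ℝ) (hf : ∀ t r : ℝ, f t r = p01 F t r) :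
    (∀ ε > (0:ℝ), ∃ δ₀ > (0:ℝ), ∀ δ : ℝ, 0 < δ → δ < δ₀ → ∀ t ∈ Set.Icc (0:ℝ) 1,
      |(∫ v in (0:ℝ)..1, f (t + δ) (t + δ - δ * v) / f (t + δ) t) - 1 / d| < ε) ∧
    (∀ ε > (0:ℝ), ∃ δ₀ > (0:ℝ), ∀ δ : ℝ, 0 < δ → δ < δ₀ → ∀ t ∈ Set.Icc (0:ℝ) 1,
      |(∫ v in (0:ℝ)..1, |f (t + δ) (t + δ - δ * v) / f (t + δ) t|) - 1 / d| < ε) := by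
  obtain ⟨hC, hD, hpos, hlim, -⟩ := hF
  have hd0 : 0 < d := hd.1
  have hinv : ContinuousAt (fun x : ℝ => -x⁻¹) (-d) :=
    (continuousAt_inv₀ (neg_ne_zero.mpr hd0.ne')).neg
  have key : ∀ ε > 0, ∃ δ₀ > 0, ∀ δ : ℝ, 0 < δ → δ < δ₀ → ∀ t ∈ Icc (0:ℝ) 1,
      (∀ h ∈ Ioc 0 δ, d / 2 * F (t + δ) (t + δ - h) ≤ -(h * p01 F (t + δ) (t + δ - h))) ∧
      |-(δ * p01 F (t + δ) t / F (t + δ) t)⁻¹ - 1 / d| < ε := by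
    intro ε hε
    obtain ⟨η, hη, hball⟩ := Metric.continuousAt_iff.mp hinv ε hε
    obtain ⟨δ₀, hδ₀, hδ₀'⟩ := exists_uniform_slope_le hpos hlim hd0 hη
    refine ⟨δ₀, hδ₀, fun δ hδ hδδ₀ t ht => ⟨(hδ₀' δ hδ hδδ₀ t ht).2, ?_⟩⟩
    have := @hball (δ * p01 F (t + δ) t / F (t + δ) t)
      (by rw [Real.dist_eq, sub_neg_eq_add]; exact (hδ₀' δ hδ hδδ₀ t ht).1)
    rwa [Real.dist_eq, inv_neg, neg_neg, inv_eq_one_div d] at this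
  simp only [hf]
  refine ⟨fun ε hε => ?_, fun ε hε => ?_⟩ <;>
    obtain ⟨δ₀, hδ₀, hkey⟩ := key ε hε <;>
    refine ⟨δ₀, hδ₀, fun δ hδ hδδ₀ t ht => ?_⟩ <;>
    obtain ⟨hslope, hest⟩ := hkey δ hδ hδδ₀ t ht
  · rwa [integral_p01_div_eq hC hD hpos (half_pos hd0) hδ hslope]
  · rwa [integral_abs_p01_div_eq hδ fun h hh =>
        (p01_neg_of_slope_le hpos (half_pos hd0) hslope hh).le,
      integral_p01_div_eq hC hD hpos (half_pos hd0) hδ hslope]
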